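/- arXiv:1610.00853 — 2 statements merged into one kernel-verified Lean document; each statement's English description precedes it below -/
import Mathlib

section
/- Let G be a connected (2K_2, C_4, C_5)-free graph (a connected finite simple graph with no induced 2K_2, no induced C_4 and no induced C_5) and let S be a minimal vertex separator of G. Suppose G − S has a non-trivial connected component G_1 and the induced subgraph on V(G_1) is a tree. If there exists a vertex v ∈ S with |N_G(v) ∩ V(G_1)| = 1, then S \ {v} is a minimum feedback vertex set of G, so the minimum cardinality of a feedback vertex set of G equals |S| − 1; if every vertex v ∈ S satisfies |N_G(v) ∩ V(G_1)| ≥ 2, then S is a minimum feedback vertex set of G, so the minimum cardinality equals |S|. -/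
/-!
Since `G` is 2K₂-free, one of the two vertices separated by `S`, say `b`, has all its neighbours
in `S`, and the minimality of `S` makes every vertex of `S` adjacent to `b` and to the other side.
For two non-adjacent `s, t ∈ S`, a shortest path between their neighbourhoods on the other side
would close an induced C₄, C₅ or 2K₂ with `b`; hence `S ∪ {b}` is a clique, a feedback vertex set
misses at most two of its vertices, and every feedback vertex set has at least `|S| - 1` vertices.

Again by 2K₂-freeness every edge of `G − S` lies in the tree `G₁`, so `S` is a feedback vertex
set, and so is `S \ {v}` when `v` has a single neighbour in `G₁`. If instead every `s ∈ S` has two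
neighbours in `G₁`, a shortest path between them yields a triangle made of `s` and an edge of `G₁`.
A feedback vertex set avoiding `s` must then contain a vertex of `G₁`, which lies outside the
clique, and the lower bound rises to `|S|`.
-/

variable {V : Type*}

/-- The graph `G − S`: delete the vertices of `S` (they become isolated). -/
def SimpleGraph.removeVerts (G : SimpleGraph V) (S : Set V) : SimpleGraph V where
  Adj u v := G.Adj u v ∧ u ∉ S ∧ v ∉ S
  symm := ⟨fun u v ⟨h, hu, hv⟩ => ⟨h.symm, hv, hu⟩⟩
  loopless := ⟨fun u ⟨h, _, _⟩ => G.loopless.irrefl u h⟩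

/-- `S` is a minimal vertex separator of `G`: some `a, b ∉ S` lie in different
connected components of `G − S`, while for every proper subset `S' ⊊ S` they lie
in the same connected component of `G − S'`. -/
def SimpleGraph.IsMinSep (G : SimpleGraph V) (S : Set V) : Prop :=
  ∃ a b : V, a ∉ S ∧ b ∉ S ∧ ¬ (G.removeVerts S).Reachable a b ∧
    ∀ S' : Set V, S' ⊂ S → (G.removeVerts S').Reachable a b

/-- `C` is (the vertex set of) a connected component of `G − S`. -/
def SimpleGraph.IsCompOf (G : SimpleGraph V) (S : Set V) (C : Set V) : Prop :=
  ∃ u : V, u ∉ S ∧ C = {v : V | (G.removeVerts S).Reachable u v ∧ v ∉ S}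

/-- `G` has no induced `2K₂`. -/
def SimpleGraph.TwoK2Free (G : SimpleGraph V) : Prop :=
  ¬ ∃ a b c d : V, a ≠ b ∧ a ≠ c ∧ a ≠ d ∧ b ≠ c ∧ b ≠ d ∧ c ≠ d ∧
    G.Adj a b ∧ G.Adj c d ∧ ¬ G.Adj a c ∧ ¬ G.Adj a d ∧ ¬ G.Adj b c ∧ ¬ G.Adj b d

/-- `G` has an induced cycle on `k` vertices, all of them lying in `A`. -/
def SimpleGraph.HasInducedCycleOn (G : SimpleGraph V) (A : Set V) (k : ℕ) [NeZero k] : Prop :=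
  ∃ f : Fin k → V, Function.Injective f ∧ (∀ i, f i ∈ A) ∧
    ∀ i j : Fin k, G.Adj (f i) (f j) ↔ (j = i + 1 ∨ i = j + 1)

/-- `G` has no induced cycle on `k` vertices. -/
def SimpleGraph.CkFree (G : SimpleGraph V) (k : ℕ) [NeZero k] : Prop :=
  ¬ G.HasInducedCycleOn Set.univ k

/-- `F` is a feedback vertex set of `G`: `G − F` contains no cycle. -/
def SimpleGraph.IsFVS (G : SimpleGraph V) (F : Set V) : Prop :=
  (G.removeVerts F).IsAcyclic

/-- The minimum cardinality of a feedback vertex set of `G`. -/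
noncomputable def SimpleGraph.minFVS (G : SimpleGraph V) : ℕ :=
  sInf {n : ℕ | ∃ F : Set V, G.IsFVS F ∧ F.ncard = n}

namespace SimpleGraph

variable {G : SimpleGraph V} {S : Set V}

lemma removeVerts_le : G.removeVerts S ≤ G := fun _ _ h => h.1

lemma Reachable.notMem_of_removeVerts {u v : V} (h : (G.removeVerts S).Reachable u v)
    (hu : u ∉ S) : v ∉ S := by
  obtain ⟨p⟩ := h
  cases p.reverse with
  | nil => exact hu
  | cons h _ => exact h.2.1

lemma Reachable.eq_of_forall_not_adj {u v : V} (h : G.Reachable u v) (hu : ∀ w, ¬ G.Adj u w) :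
    v = u := by
  obtain ⟨p⟩ := h
  cases p with
  | nil => rfl
  | cons h _ => exact absurd h (hu _)

lemma TwoK2Free.elim (h : G.TwoK2Free) {a b c d : V} (hab : G.Adj a b) (hcd : G.Adj c d)
    (nac : ¬ G.Adj a c) (nad : ¬ G.Adj a d) (nbc : ¬ G.Adj b c) (nbd : ¬ G.Adj b d) : False := by
  refine h ⟨a, b, c, d, hab.ne, ?_, ?_, ?_, ?_, hcd.ne, hab, hcd, nac, nad, nbc, nbd⟩ <;>
    rintro rfl <;> simp_all [G.adj_comm]

lemma CkFree.elim_four (h : G.CkFree 4) {p q r s : V}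
    (hpq : G.Adj p q) (hqr : G.Adj q r) (hrs : G.Adj r s) (hsp : G.Adj s p)
    (hpr : p ≠ r) (hqs : q ≠ s) (npr : ¬ G.Adj p r) (nqs : ¬ G.Adj q s) : False := by
  refine h ⟨![p, q, r, s], ?_, fun _ => Set.mem_univ _, ?_⟩
  · intro i j hij
    fin_cases i <;> fin_cases j <;> simp at hij ⊢ <;> subst hij <;> simp_all [G.adj_comm]
  · intro i j
    fin_cases i <;> fin_cases j <;> simp [*, hsp.symm, G.adj_comm]

lemma CkFree.elim_five (h : G.CkFree 5) {p q r s t : V}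
    (hpq : G.Adj p q) (hqr : G.Adj q r) (hrs : G.Adj r s) (hst : G.Adj s t) (htp : G.Adj t p)
    (npr : ¬ G.Adj p r) (nps : ¬ G.Adj p s) (nqs : ¬ G.Adj q s) (nqt : ¬ G.Adj q t)
    (nrt : ¬ G.Adj r t) : False := by
  refine h ⟨![p, q, r, s, t], ?_, fun _ => Set.mem_univ _, ?_⟩
  · intro i j hij
    fin_cases i <;> fin_cases j <;> simp at hij ⊢ <;> subst hij <;> simp_all [G.adj_comm]
  · intro i j
    fin_cases i <;> fin_cases j <;> simp [*, htp.symm, G.adj_comm]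

lemma TwoK2Free.reachable_removeVerts (h : G.TwoK2Free) {x₁ x₂ y₁ y₂ : V}
    (hx : (G.removeVerts S).Adj x₁ x₂) (hy : (G.removeVerts S).Adj y₁ y₂) :
    (G.removeVerts S).Reachable x₁ y₁ := by
  have edge {u w : V} (huw : G.Adj u w) (hu : u ∉ S) (hw : w ∉ S) :
      (G.removeVerts S).Reachable u w :=
    Adj.reachable ⟨huw, hu, hw⟩
  by_contra hr
  refine h.elim hx.1 hy.1 (fun h => hr ?_) (fun h => hr ?_) (fun h => hr ?_) (fun h => hr ?_)
  · exact edge h hx.2.1 hy.2.1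
  · exact (edge h hx.2.1 hy.2.2).trans hy.reachable.symm
  · exact hx.reachable.trans (edge h hx.2.2 hy.2.1)
  · exact hx.reachable.trans ((edge h hx.2.2 hy.2.2).trans hy.reachable.symm)

namespace IsCompOf

variable {C : Set V} {x y : V}

lemma notMem (hC : G.IsCompOf S C) (hx : x ∈ C) : x ∉ S := by
  obtain ⟨u, -, rfl⟩ := hC
  exact hx.2

lemma reachable (hC : G.IsCompOf S C) (hx : x ∈ C) (hy : y ∈ C) :
    (G.removeVerts S).Reachable x y := by
  obtain ⟨u, -, rfl⟩ := hC
  exact hx.1.symm.trans hy.1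

lemma mem_of_reachable (hC : G.IsCompOf S C) (hx : x ∈ C)
    (h : (G.removeVerts S).Reachable x y) : y ∈ C := by
  obtain ⟨u, -, rfl⟩ := hC
  exact ⟨hx.1.trans h, h.notMem_of_removeVerts hx.2⟩

lemma nonempty (hC : G.IsCompOf S C) : C.Nonempty := by
  obtain ⟨u, hu, rfl⟩ := hC
  exact ⟨u, .rfl, hu⟩

lemma exists_adj_of_mem (hC : G.IsCompOf S C) (hnt : ¬ ∃ v, C = {v}) (hx : x ∈ C) :
    ∃ y, (G.removeVerts S).Adj x y := by
  obtain ⟨z, hz, hzx⟩ : ∃ z ∈ C, z ≠ x := by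
    by_contra! h
    exact hnt ⟨x, Set.eq_singleton_iff_unique_mem.2 ⟨hx, h⟩⟩
  by_contra! hiso
  exact hzx ((hC.reachable hx hz).eq_of_forall_not_adj hiso)

lemma mem_of_adj (hC : G.IsCompOf S C) (h2k2 : G.TwoK2Free) (hnt : ¬ ∃ v, C = {v})
    (h : (G.removeVerts S).Adj x y) : x ∈ C := by
  obtain ⟨u, hu⟩ := hC.nonempty
  obtain ⟨w, huw⟩ := hC.exists_adj_of_mem hnt hu
  exact hC.mem_of_reachable hu (h2k2.reachable_removeVerts huw h)

end IsCompOf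

lemma Walk.IsCycle.exists_adj_adj_ne {H : SimpleGraph V} {u z : V} {c : H.Walk u u}
    (hc : c.IsCycle) (hz : z ∈ c.support) :
    ∃ y₁ y₂, y₁ ≠ y₂ ∧ H.Adj z y₁ ∧ H.Adj z y₂ ∧ y₁ ∈ c.support ∧ y₂ ∈ c.support := by
  obtain ⟨y₁, y₂, hne, hy⟩ := Set.ncard_eq_two.1 (hc.ncard_neighborSet_toSubgraph_eq_two hz)
  have h₁ : c.toSubgraph.Adj z y₁ := by
    rw [← Subgraph.mem_neighborSet, hy]; exact Set.mem_insert _ _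
  have h₂ : c.toSubgraph.Adj z y₂ := by
    rw [← Subgraph.mem_neighborSet, hy]; exact Set.mem_insert_of_mem _ rfl
  exact ⟨y₁, y₂, hne, h₁.adj_sub, h₂.adj_sub, (c.mem_verts_toSubgraph).1 h₁.snd_mem,
    (c.mem_verts_toSubgraph).1 h₂.snd_mem⟩

lemma Walk.IsCycle.exists_notMem_of_isAcyclic_induce {H : SimpleGraph V} {C : Set V} {u : V}
    {c : H.Walk u u} (hc : c.IsCycle) (hHG : H ≤ G) (hC : (G.induce C).IsAcyclic) :
    ∃ z ∈ c.support, z ∉ C := by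
  by_contra! hsub
  have hsub' : ∀ z ∈ (c.mapLe hHG).support, z ∈ C := by
    rwa [Walk.support_mapLe_eq_support]
  have hc' := hc.mapLe hHG
  rw [← Walk.map_induce _ hsub'] at hc'
  exact hC _ ((Walk.isCycle_map_iff_of_injective (Embedding.induce (G := G) C).injective).1 hc')

lemma isFVS_of_isCompOf {C : Set V} (h2k2 : G.TwoK2Free) (hC : G.IsCompOf S C)
    (hnt : ¬ ∃ v, C = {v}) (hCa : (G.induce C).IsAcyclic) : G.IsFVS S := by
  intro u c hc
  obtain ⟨z, hz, hzC⟩ := hc.exists_notMem_of_isAcyclic_induce removeVerts_le hCa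
  obtain ⟨y, -, -, hzy, -⟩ := hc.exists_adj_adj_ne hz
  exact hzC (hC.mem_of_adj h2k2 hnt hzy)

lemma isFVS_diff_singleton {C : Set V} (h2k2 : G.TwoK2Free) (hC : G.IsCompOf S C)
    (hnt : ¬ ∃ v, C = {v}) (hCa : (G.induce C).IsAcyclic) {v : V}
    (hv : (G.neighborSet v ∩ C).Subsingleton) : G.IsFVS (S \ {v}) := by
  intro u c hc
  have hmem : ∀ z ∈ c.support, z ∉ S → z ∈ C := by
    intro z hz hzS
    obtain ⟨y₁, y₂, hne, h₁, h₂, -, -⟩ := hc.exists_adj_adj_ne hz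
    obtain ⟨y, hy, hyv⟩ : ∃ y, (G.removeVerts (S \ {v})).Adj z y ∧ y ≠ v := by
      rcases eq_or_ne y₁ v with rfl | h
      · exact ⟨y₂, h₂, hne.symm⟩
      · exact ⟨y₁, h₁, h⟩
    exact hC.mem_of_adj h2k2 hnt ⟨hy.1, hzS, fun hyS => hy.2.2 ⟨hyS, hyv⟩⟩
  have hvc : v ∉ c.support := by
    intro hvc
    obtain ⟨y₁, y₂, hne, h₁, h₂, hy₁, hy₂⟩ := hc.exists_adj_adj_ne hvc
    have hS {y : V} (hy : (G.removeVerts (S \ {v})).Adj v y) : y ∉ S :=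
      fun hyS => hy.2.2 ⟨hyS, hy.ne.symm⟩
    exact hne (hv ⟨h₁.1, hmem _ hy₁ (hS h₁)⟩ ⟨h₂.1, hmem _ hy₂ (hS h₂)⟩)
  obtain ⟨z, hz, hzC⟩ := hc.exists_notMem_of_isAcyclic_induce removeVerts_le hCa
  obtain ⟨y, -, -, hzy, -⟩ := hc.exists_adj_adj_ne hz
  exact hzC (hmem z hz fun hzS => hzy.2.1 ⟨hzS, fun hzv => hvc (hzv ▸ hz)⟩)

lemma exists_shortest_path_between {H : SimpleGraph V} {A B : Set V} {x₀ y₀ : V} (hx₀ : x₀ ∈ A)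
    (hy₀ : y₀ ∈ B) (h : H.Reachable x₀ y₀) :
    ∃ (n : ℕ) (f : ℕ → V), f 0 ∈ A ∧ f n ∈ B ∧ (∀ i < n, H.Adj (f i) (f (i + 1))) ∧
      (∀ i, H.Reachable x₀ (f i)) ∧ (∀ i, 0 < i → i ≤ n → f i ∉ A) ∧ (∀ i < n, f i ∉ B) ∧
      ∀ i j, i + 2 ≤ j → j ≤ n → ¬ H.Adj (f i) (f j) := by
  classical
  have hP : ∃ n, ∃ x y, ∃ p : H.Walk x y, x ∈ A ∧ y ∈ B ∧ H.Reachable x₀ x ∧ p.length = n :=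
    ⟨_, x₀, y₀, h.some, hx₀, hy₀, .rfl, rfl⟩
  obtain ⟨x, y, p, hx, hy, hx₀x, hlen⟩ := Nat.find_spec hP
  have hmin {x' y' : V} (q : H.Walk x' y') (hx' : x' ∈ A) (hy' : y' ∈ B)
      (hr : H.Reachable x₀ x') : p.length ≤ q.length :=
    hlen ▸ Nat.find_min' hP ⟨x', y', q, hx', hy', hr, rfl⟩
  have hreach (i : ℕ) : H.Reachable x₀ (p.getVert i) := hx₀x.trans ⟨p.take i⟩
  refine ⟨p.length, p.getVert, by simpa, by simpa, fun i hi => p.adj_getVert_succ hi, hreach,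
    fun i hi₀ hi hiA => ?_, fun i hi hiB => ?_, fun i j hij hj hadj => ?_⟩
  · have := hmin (p.drop i) hiA hy (hreach i)
    simp only [Walk.drop_length] at this
    omega
  · have := hmin (p.take i) hx hiB hx₀x
    simp only [Walk.take_length] at this
    omega
  · have := hmin (((p.take i).append hadj.toWalk).append (p.drop j)) hx hy hx₀x
    simp only [Walk.length_append, Walk.take_length, Walk.drop_length, Walk.length_cons,
      Walk.length_nil] at this
    omega

lemma TwoK2Free.adj_of_neighborSet_subset (h2k2 : G.TwoK2Free) (hc4 : G.CkFree 4)
    (hc5 : G.CkFree 5) {b s t x₀ y₀ : V} (hbS : G.neighborSet b ⊆ S) (hx₀ : x₀ ∉ S)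
    (hx₀b : ¬ (G.removeVerts S).Reachable x₀ b) (hx₀y₀ : (G.removeVerts S).Reachable x₀ y₀)
    (hsb : G.Adj s b) (htb : G.Adj t b) (hsx₀ : G.Adj s x₀) (hty₀ : G.Adj t y₀) (hst : s ≠ t) :
    G.Adj s t := by
  by_contra hst'
  obtain ⟨n, f, hf₀, hfn, hadj, hreach, hA, hB, -⟩ :=
    exists_shortest_path_between (A := G.neighborSet s) (B := G.neighborSet t) hsx₀ hty₀ hx₀y₀
  have hfb (i : ℕ) : ¬ G.Adj (f i) b :=
    fun h => (hreach i).notMem_of_removeVerts hx₀ (hbS h.symm)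
  rcases n with _ | _ | n
  · exact hc4.elim_four hf₀ hfn.symm htb hsb.symm hst (fun h => hx₀b (h ▸ hreach 0)) hst' (hfb 0)
  · exact hc5.elim_five hf₀ (hadj 0 one_pos).1 hfn.symm htb hsb.symm (hA 1 one_pos le_rfl) hst'
      (fun h => hB 0 one_pos h.symm) (hfb 0) (hfb 1)
  · exact h2k2.elim hsb (hadj 1 (by omega)).1 (hA 1 one_pos (by omega)) (hA 2 two_pos (by omega))
      (fun h => hfb 1 h.symm) (fun h => hfb 2 h.symm)

lemma exists_adj_of_reachable_removeVerts_diff_singleton {s x y : V} (hx : x ∉ S)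
    (h : (G.removeVerts (S \ {s})).Reachable x y) :
    (G.removeVerts S).Reachable x y ∨ ∃ z, (G.removeVerts S).Reachable x z ∧ G.Adj z s := by
  obtain ⟨p⟩ := h
  induction p with
  | nil => exact .inl .rfl
  | @cons x z y h _ ih =>
    by_cases hzs : z = s
    · exact .inr ⟨x, .rfl, hzs ▸ h.1⟩
    have hzS : z ∉ S := fun hzS => h.2.2 ⟨hzS, hzs⟩
    have hxz : (G.removeVerts S).Reachable x z := Adj.reachable ⟨h.1, hx, hzS⟩
    rcases ih hzS with hr | ⟨w, hw, hws⟩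
    · exact .inl (hxz.trans hr)
    · exact .inr ⟨w, hxz.trans hw, hws⟩

lemma exists_adj_of_forall_ssubset_reachable {a b s : V} (ha : a ∉ S)
    (hab : ¬ (G.removeVerts S).Reachable a b)
    (hmin : ∀ S' : Set V, S' ⊂ S → (G.removeVerts S').Reachable a b) (hs : s ∈ S) :
    ∃ x, (G.removeVerts S).Reachable a x ∧ G.Adj x s :=
  (exists_adj_of_reachable_removeVerts_diff_singleton ha
    (hmin _ (Set.sdiff_singleton_ssubset.2 hs))).resolve_left hab

lemma IsMinSep.exists_neighborSet_subset (hS : G.IsMinSep S) (h2k2 : G.TwoK2Free) :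
    ∃ a b, a ∉ S ∧ b ∉ S ∧ ¬ (G.removeVerts S).Reachable a b ∧
      (∀ S' : Set V, S' ⊂ S → (G.removeVerts S').Reachable a b) ∧ G.neighborSet b ⊆ S := by
  obtain ⟨a, b, ha, hb, hab, hmin⟩ := hS
  by_cases hbS : G.neighborSet b ⊆ S
  · exact ⟨a, b, ha, hb, hab, hmin, hbS⟩
  refine ⟨b, a, hb, ha, fun h => hab h.symm, fun S' h => (hmin S' h).symm, fun x hx => ?_⟩
  by_contra hxS
  obtain ⟨y, hy, hyS⟩ := Set.not_subset.1 hbS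
  exact hab (h2k2.reachable_removeVerts ⟨hx, ha, hxS⟩ ⟨hy, hb, hyS⟩)

lemma isClique_insert_of_forall_ssubset_reachable (h2k2 : G.TwoK2Free) (hc4 : G.CkFree 4)
    (hc5 : G.CkFree 5) {a b : V} (ha : a ∉ S) (hb : b ∉ S)
    (hab : ¬ (G.removeVerts S).Reachable a b)
    (hmin : ∀ S' : Set V, S' ⊂ S → (G.removeVerts S').Reachable a b)
    (hbS : G.neighborSet b ⊆ S) : G.IsClique (insert b S) := by
  have hsb {s : V} (hs : s ∈ S) : G.Adj s b := by
    obtain ⟨y, hby, hys⟩ := exists_adj_of_forall_ssubset_reachable hb (fun h => hab h.symm)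
      (fun S' h => (hmin S' h).symm) hs
    rwa [hby.eq_of_forall_not_adj fun w hw => hw.2.2 (hbS hw.1), G.adj_comm] at hys
  refine isClique_insert.2 ⟨fun s hs t ht hst => ?_, fun s hs _ => (hsb hs).symm⟩
  obtain ⟨x, hax, hxs⟩ := exists_adj_of_forall_ssubset_reachable ha hab hmin hs
  obtain ⟨y, hay, hyt⟩ := exists_adj_of_forall_ssubset_reachable ha hab hmin ht
  exact h2k2.adj_of_neighborSet_subset hc4 hc5 hbS (hax.notMem_of_removeVerts ha)
    (fun h => hab (hax.trans h)) (hax.symm.trans hay) (hsb hs) (hsb ht) hxs.symm hyt.symm hst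

lemma TwoK2Free.exists_triangle_of_adj_of_adj (h2k2 : G.TwoK2Free) (hc4 : G.CkFree 4)
    (hc5 : G.CkFree 5) {s x y : V} (hs : s ∈ S) (hx : x ∉ S)
    (hxy : (G.removeVerts S).Reachable x y) (hne : x ≠ y) (hsx : G.Adj s x) (hsy : G.Adj s y) :
    ∃ x' y', (G.removeVerts S).Adj x' y' ∧ G.Adj s x' ∧ G.Adj s y' := by
  obtain ⟨n, f, rfl, hfn, hadj, hreach, hA, hB, hchord⟩ :=
    exists_shortest_path_between (A := {x}) (B := G.neighborSet s \ {x}) rfl ⟨hsy, hne.symm⟩ hxy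
  have hfS (i : ℕ) : f i ∉ S := (hreach i).notMem_of_removeVerts hx
  have hsf {i : ℕ} (hi₀ : 0 < i) (hi : i < n) : ¬ G.Adj s (f i) :=
    fun h => hB i hi ⟨h, hA i hi₀ hi.le⟩
  have hff {i j : ℕ} (hij : i + 2 ≤ j) (hj : j ≤ n) : ¬ G.Adj (f i) (f j) :=
    fun h => hchord i j hij hj ⟨h, hfS i, hfS j⟩
  rcases n with _ | _ | _ | _ | n
  · exact absurd rfl hfn.2
  · exact ⟨f 0, f 1, hadj 0 one_pos, hsx, hfn.1⟩
  · exact (hc4.elim_four hsx (hadj 0 (by omega)).1 (hadj 1 (by omega)).1 hfn.1.symm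
      (fun h => hfS 1 (h ▸ hs)) (fun h => hA 2 two_pos le_rfl h.symm)
      (hsf one_pos (by omega)) (hff le_rfl le_rfl)).elim
  · exact (hc5.elim_five hsx (hadj 0 (by omega)).1 (hadj 1 (by omega)).1 (hadj 2 (by omega)).1
      hfn.1.symm (hsf (by omega) (by omega)) (hsf (by omega) (by omega)) (hff le_rfl (by omega))
      (hff (by omega) le_rfl) (hff le_rfl le_rfl)).elim
  · exact (h2k2.elim hsx (hadj 2 (by omega)).1 (hsf (by omega) (by omega))
      (hsf (by omega) (by omega)) (hff le_rfl (by omega)) (hff (by omega) (by omega))).elim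

lemma IsFVS.mem_or_mem_or_mem {F : Set V} (hF : G.IsFVS F) {x y z : V} (hxy : G.Adj x y)
    (hyz : G.Adj y z) (hxz : G.Adj x z) : x ∈ F ∨ y ∈ F ∨ z ∈ F := by
  classical
  by_contra! h
  exact IsAcyclic.cliqueFree hF le_rfl {x, y, z} (is3Clique_triple_iff.2
    ⟨⟨hxy, h.1, h.2.1⟩, ⟨hxz, h.1, h.2.2⟩, ⟨hyz, h.2.1, h.2.2⟩⟩)

lemma IsClique.ncard_le_ncard_inter_add_two {K F : Set V} (hK : G.IsClique K) (hF : G.IsFVS F) :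
    K.ncard ≤ (K ∩ F).ncard + 2 := by
  have hdiff : (K \ F).ncard ≤ 2 := by
    by_contra! h
    obtain ⟨x, y, z, hx, hy, hz, hxy, hxz, hyz⟩ :=
      (Set.two_lt_ncard_iff (Set.finite_of_ncard_pos (by omega))).1 h
    rcases hF.mem_or_mem_or_mem (hK hx.1 hy.1 hxy) (hK hy.1 hz.1 hyz) (hK hx.1 hz.1 hxz)
      with h | h | h
    exacts [hx.2 h, hy.2 h, hz.2 h]
  calc K.ncard = ((K ∩ F) ∪ (K \ F)).ncard := by rw [Set.inter_union_sdiff]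
    _ ≤ (K ∩ F).ncard + (K \ F).ncard := Set.ncard_union_le _ _
    _ ≤ (K ∩ F).ncard + 2 := by omega

lemma IsClique.ncard_le_ncard_add_two [Finite V] {K F : Set V} (hK : G.IsClique K)
    (hF : G.IsFVS F) : K.ncard ≤ F.ncard + 2 :=
  (hK.ncard_le_ncard_inter_add_two hF).trans
    (Nat.add_le_add_right (Set.ncard_le_ncard Set.inter_subset_right) 2)

lemma IsClique.ncard_le_ncard_add_one [Finite V] {K F : Set V} (hK : G.IsClique K)
    (hF : G.IsFVS F) (hFK : ¬ F ⊆ K) : K.ncard ≤ F.ncard + 1 := by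
  obtain ⟨w, hwF, hwK⟩ := Set.not_subset.1 hFK
  have : (K ∩ F).ncard < F.ncard :=
    Set.ncard_lt_ncard ⟨Set.inter_subset_right, fun h => hwK (h hwF).1⟩
  have := hK.ncard_le_ncard_inter_add_two hF
  omega

lemma minFVS_eq_of_forall_le {F₀ : Set V} (hF₀ : G.IsFVS F₀)
    (hle : ∀ F, G.IsFVS F → F₀.ncard ≤ F.ncard) : G.minFVS = F₀.ncard :=
  le_antisymm (Nat.sInf_le ⟨F₀, hF₀, rfl⟩)
    (le_csInf ⟨_, F₀, hF₀, rfl⟩ (by rintro _ ⟨F, hF, rfl⟩; exact hle F hF))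

lemma not_subset_insert_of_isFVS (h2k2 : G.TwoK2Free) (hc4 : G.CkFree 4) (hc5 : G.CkFree 5)
    {C F : Set V} {b : V} (hC : G.IsCompOf S C) (hall : ∀ v ∈ S, 2 ≤ (G.neighborSet v ∩ C).ncard)
    (hbS : G.neighborSet b ⊆ S) (hF : G.IsFVS F) (hSF : ¬ S ⊆ F) : ¬ F ⊆ insert b S := by
  obtain ⟨s, hs, hsF⟩ := Set.not_subset.1 hSF
  have h2 := hall s hs
  obtain ⟨x, y, hx, hy, hxy⟩ := (Set.one_lt_ncard_iff (Set.finite_of_ncard_pos (by omega))).1 h2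
  obtain ⟨x', y', hx'y', hsx', hsy'⟩ := h2k2.exists_triangle_of_adj_of_adj hc4 hc5 hs
    (hC.notMem hx.2) (hC.reachable hx.2 hy.2) hxy hx.1 hy.1
  have hout {w w' : V} (h : (G.removeVerts S).Adj w w') : w ∉ insert b S := by
    rintro (rfl | hwS)
    exacts [h.2.2 (hbS h.1), h.2.1 hwS]
  intro hFK
  rcases hF.mem_or_mem_or_mem hsx' hx'y'.1 hsy' with h | h | h
  exacts [hsF h, hout hx'y' (hFK h), hout hx'y'.symm (hFK h)]

end SimpleGraph

open SimpleGraph in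
theorem stmt13_general [Fintype V] (G : SimpleGraph V) (S C : Set V)
    (h2k2 : G.TwoK2Free) (hc4 : G.CkFree 4) (hc5 : G.CkFree 5)
    (hS : G.IsMinSep S) (hC : G.IsCompOf S C) (hnt : ¬ ∃ v, C = {v})
    (htree : (G.induce C).IsTree) :
    (∀ v ∈ S, (G.neighborSet v ∩ C).ncard = 1 →
      G.IsFVS (S \ {v}) ∧ (∀ F : Set V, G.IsFVS F → (S \ {v}).ncard ≤ F.ncard) ∧
      G.minFVS = S.ncard - 1) ∧
    ((∀ v ∈ S, 2 ≤ (G.neighborSet v ∩ C).ncard) →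
      G.IsFVS S ∧ (∀ F : Set V, G.IsFVS F → S.ncard ≤ F.ncard) ∧
      G.minFVS = S.ncard) := by
  obtain ⟨a, b, ha, hb, hab, hmin, hbS⟩ := hS.exists_neighborSet_subset h2k2
  have hK : G.IsClique (insert b S) :=
    isClique_insert_of_forall_ssubset_reachable h2k2 hc4 hc5 ha hb hab hmin hbS
  have hKcard : (insert b S).ncard = S.ncard + 1 := Set.ncard_insert_of_notMem hb
  refine ⟨fun v hv hv1 => ?_, fun hall => ?_⟩
  · have hcard : (S \ {v}).ncard = S.ncard - 1 := Set.ncard_sdiff_singleton_of_mem hv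
    have hF := isFVS_diff_singleton h2k2 hC hnt htree.isAcyclic
      (Set.ncard_le_one_iff_subsingleton.1 hv1.le)
    have hle (F : Set V) (hF' : G.IsFVS F) : (S \ {v}).ncard ≤ F.ncard := by
      have := hK.ncard_le_ncard_add_two hF'
      omega
    exact ⟨hF, hle, by rw [minFVS_eq_of_forall_le hF hle, hcard]⟩
  · have hF := isFVS_of_isCompOf h2k2 hC hnt htree.isAcyclic
    have hle (F : Set V) (hF' : G.IsFVS F) : S.ncard ≤ F.ncard := by
      by_cases hSF : S ⊆ F
      · exact Set.ncard_le_ncard hSF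
      have := hK.ncard_le_ncard_add_one hF'
        (not_subset_insert_of_isFVS h2k2 hc4 hc5 hC hall hbS hF' hSF)
      omega
    exact ⟨hF, hle, minFVS_eq_of_forall_le hF hle⟩

theorem stmt13 [Fintype V] (G : SimpleGraph V) (S C : Set V)
    (hconn : G.Connected) (h2k2 : G.TwoK2Free) (hc4 : G.CkFree 4) (hc5 : G.CkFree 5)
    (hS : G.IsMinSep S) (hC : G.IsCompOf S C) (hnt : ¬ ∃ v, C = {v})
    (htree : (G.induce C).IsTree) :
    (∀ v ∈ S, (G.neighborSet v ∩ C).ncard = 1 →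
      G.IsFVS (S \ {v}) ∧ (∀ F : Set V, G.IsFVS F → (S \ {v}).ncard ≤ F.ncard) ∧
      G.minFVS = S.ncard - 1) ∧
    ((∀ v ∈ S, 2 ≤ (G.neighborSet v ∩ C).ncard) →
      G.IsFVS S ∧ (∀ F : Set V, G.IsFVS F → S.ncard ≤ F.ncard) ∧
      G.minFVS = S.ncard) :=
  stmt13_general G S C h2k2 hc4 hc5 hS hC hnt htree
end

section
/- Let G be a connected (2K_2, C_3)-free graph (a connected finite simple graph with no induced 2K_2 and no induced C_3), let S be a minimal vertex separator of G, and let G_1 be a non-trivial connected component of G − S. Then for every vertex x ∈ S, the set N_G(x) ∩ V(G_1) is an independent set of G, and any two distinct vertices u, v ∈ N_G(x) ∩ V(G_1) are at distance exactly 2 in the induced subgraph on V(G_1), i.e., u and v are non-adjacent and have a common neighbor in V(G_1). -/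
variable {V : Type*}

/-!
Triangle-freeness makes `N(x)` independent. For the distance claim work in `H = G − S`, where
`u, v` are joined and nonadjacent, so `2 ≤ d_H(u, v)`. As an induced subgraph plus isolated
vertices, `H` is 2K₂-free, so `d_H(u, v) ≤ 3`: the first and the fourth edge of a longer
shortest path would form an induced 2K₂. By minimality of `S`, some path between the two
separated vertices `a, b` in `G − (S ∖ {x})` passes through `x`, and the neighbours of `x` on it
lie in the components of `a` and of `b`; so `x` has a neighbour `y` outside the component of
`u`. A walk `u p₁ p₂ v` in `H` would then make `p₁p₂, xy` an induced 2K₂, since `p₁, p₂` are not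
adjacent to `x` (triangles `x u p₁`, `x v p₂`) nor to `y` (another component). Hence
`d_H(u, v) = 2`.
-/

namespace SimpleGraph

variable {G : SimpleGraph V}

theorem CkFree.not_adj_of_adj_of_adj (h : G.CkFree 3) {a b c : V} (hab : G.Adj a b)
    (hac : G.Adj a c) : ¬ G.Adj b c := by
  intro hbc
  refine h ⟨![a, b, c], ?_, fun _ => trivial, ?_⟩
  · intro i j hij
    fin_cases i <;> fin_cases j <;>
      simp_all [hab.ne, hbc.ne, hac.ne, hab.ne', hbc.ne', hac.ne']
  · intro i j
    fin_cases i <;> fin_cases j <;>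
      simp [hab, hbc, hac, hab.symm, hbc.symm, hac.symm]

theorem twoK2Free_iff : G.TwoK2Free ↔ ∀ a b c d : V, G.Adj a b → G.Adj c d →
    G.Adj a c ∨ G.Adj a d ∨ G.Adj b c ∨ G.Adj b d := by
  constructor
  · intro h a b c d hab hcd
    by_contra! hn
    obtain ⟨hac, had, hbc, hbd⟩ := hn
    refine h ⟨a, b, c, d, hab.ne, ?_, ?_, ?_, ?_, hcd.ne, hab, hcd, hac, had, hbc, hbd⟩ <;>
      rintro rfl
    exacts [had hcd, hac hcd.symm, hbd hcd, hbc hcd.symm]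
  · rintro h ⟨a, b, c, d, -, -, -, -, -, -, hab, hcd, hac, had, hbc, hbd⟩
    rcases h a b c d hab hcd with h | h | h | h <;> contradiction

theorem TwoK2Free.removeVerts (h : G.TwoK2Free) (S : Set V) : (G.removeVerts S).TwoK2Free := by
  rw [twoK2Free_iff] at h ⊢
  intro a b c d hab hcd
  exact (h a b c d hab.1 hcd.1).imp (fun h => ⟨h, hab.2.1, hcd.2.1⟩) <| .imp
    (fun h => ⟨h, hab.2.1, hcd.2.2⟩) <| .imp (fun h => ⟨h, hab.2.2, hcd.2.1⟩)
    fun h => ⟨h, hab.2.2, hcd.2.2⟩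

theorem Walk.dist_getVert_getVert_of_length_eq_dist {u v : V} (p : G.Walk u v)
    (hp : p.length = G.dist u v) {i j : ℕ} (hij : i ≤ j) (hj : j ≤ p.length) :
    G.dist (p.getVert i) (p.getVert j) = j - i := by
  have hsub : ((p.drop i).take (j - i)).IsSubwalk p :=
    (isSubwalk_take _ _).trans (isSubwalk_drop _ _)
  have hlen := length_eq_dist_of_subwalk hp hsub
  rw [take_length, drop_length, drop_getVert, Nat.add_sub_cancel' hij] at hlen
  omega

theorem TwoK2Free.dist_le_three (h : G.TwoK2Free) (u v : V) : G.dist u v ≤ 3 := by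
  by_contra! hd
  obtain ⟨p, hp⟩ := exists_walk_of_dist_ne_zero (by omega : G.dist u v ≠ 0)
  have hfar : ∀ i j, i + 2 ≤ j → j ≤ 4 → ¬ G.Adj (p.getVert i) (p.getVert j) := by
    intro i j hij hj hadj
    have := p.dist_getVert_getVert_of_length_eq_dist hp (i := i) (j := j) (by omega) (by omega)
    rw [dist_eq_one_iff_adj.2 hadj] at this
    omega
  rcases twoK2Free_iff.1 h _ _ _ _ (p.adj_getVert_succ (i := 0) (by omega))
      (p.adj_getVert_succ (i := 3) (by omega)) with h | h | h | h
  exacts [hfar 0 3 (by omega) (by omega) h, hfar 0 4 (by omega) le_rfl h,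
    hfar 1 3 le_rfl (by omega) h, hfar 1 4 (by omega) le_rfl h]

theorem Walk.length_ne_three_of_removeVerts (h2k2 : G.TwoK2Free) (hc3 : G.CkFree 3)
    {S : Set V} {x y u v : V} (hxu : G.Adj x u) (hxv : G.Adj x v) (hxy : G.Adj x y) (hy : y ∉ S)
    (huy : ¬ (G.removeVerts S).Reachable u y) (p : (G.removeVerts S).Walk u v) :
    p.length ≠ 3 := by
  intro hp
  obtain ⟨p₁, p₂, h₁, h₂, h₃⟩ : ∃ p₁ p₂, (G.removeVerts S).Adj u p₁ ∧
      (G.removeVerts S).Adj p₁ p₂ ∧ (G.removeVerts S).Adj p₂ v := by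
    rcases p with _ | ⟨h₁, _ | ⟨h₂, _ | ⟨h₃, _ | _⟩⟩⟩ <;> simp at hp
    exact ⟨_, _, h₁, h₂, h₃⟩
  have hr₁ : (G.removeVerts S).Reachable u p₁ := h₁.reachable
  have hr₂ : (G.removeVerts S).Reachable u p₂ := hr₁.trans h₂.reachable
  rcases twoK2Free_iff.1 h2k2 _ _ _ _ h₂.1 hxy with h | h | h | h
  · exact hc3.not_adj_of_adj_of_adj hxu.symm h₁.1 h.symm
  · exact huy (hr₁.trans (Adj.reachable ⟨h, h₁.2.2, hy⟩))
  · exact hc3.not_adj_of_adj_of_adj hxv.symm h₃.1.symm h.symm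
  · exact huy (hr₂.trans (Adj.reachable ⟨h, h₂.2.2, hy⟩))

theorem Walk.reachable_removeVerts_or_exists_adj {S : Set V} {x a b : V}
    (p : (G.removeVerts (S \ {x})).Walk a b) (ha : a ∉ S) :
    (G.removeVerts S).Reachable a b ∨
      ∃ y, G.Adj x y ∧ y ∉ S ∧ (G.removeVerts S).Reachable a y := by
  induction p with
  | nil => exact .inl .rfl
  | @cons a c b h p ih =>
    by_cases hcx : c = x
    · subst hcx
      exact .inr ⟨a, h.1.symm, ha, .rfl⟩
    have hc : c ∉ S := fun hc => h.2.2 ⟨hc, hcx⟩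
    have hac : (G.removeVerts S).Reachable a c := Adj.reachable ⟨h.1, ha, hc⟩
    exact (ih hc).imp hac.trans fun ⟨y, hxy, hy, hcy⟩ => ⟨y, hxy, hy, hac.trans hcy⟩

theorem IsMinSep.exists_adj_not_reachable {S : Set V} (hS : G.IsMinSep S) {x : V} (hx : x ∈ S)
    (u : V) : ∃ y, G.Adj x y ∧ y ∉ S ∧ ¬ (G.removeVerts S).Reachable u y := by
  obtain ⟨a, b, ha, hb, hab, hmin⟩ := hS
  obtain ⟨p⟩ := hmin (S \ {x}) (Set.sdiff_singleton_ssubset.2 hx)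
  obtain ⟨ya, hxya, hya, haya⟩ := (p.reachable_removeVerts_or_exists_adj ha).resolve_left hab
  obtain ⟨yb, hxyb, hyb, hbyb⟩ :=
    (p.reverse.reachable_removeVerts_or_exists_adj hb).resolve_left fun h => hab h.symm
  by_cases hu : (G.removeVerts S).Reachable u ya
  · exact ⟨yb, hxyb, hyb, fun h => hab (haya.trans (hu.symm.trans (h.trans hbyb.symm)))⟩
  · exact ⟨ya, hxya, hya, hu⟩

end SimpleGraph

theorem stmt14_general (G : SimpleGraph V) (S C : Set V)
    (h2k2 : G.TwoK2Free) (hc3 : G.CkFree 3)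
    (hS : G.IsMinSep S) (hC : G.IsCompOf S C) :
    ∀ x ∈ S,
      (∀ u ∈ G.neighborSet x ∩ C, ∀ v ∈ G.neighborSet x ∩ C, ¬ G.Adj u v) ∧
      (∀ u ∈ G.neighborSet x ∩ C, ∀ v ∈ G.neighborSet x ∩ C, u ≠ v →
        ¬ G.Adj u v ∧ ∃ w ∈ C, G.Adj u w ∧ G.Adj w v) := by
  obtain ⟨u₀, -, rfl⟩ := hC
  intro x hx
  have hindep : ∀ u ∈ G.neighborSet x, ∀ v ∈ G.neighborSet x, ¬ G.Adj u v :=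
    fun u hu v hv => hc3.not_adj_of_adj_of_adj hu hv
  refine ⟨fun u hu v hv => hindep u hu.1 v hv.1, fun u hu v hv hne => ⟨hindep u hu.1 v hv.1, ?_⟩⟩
  set H := G.removeVerts S
  have huv : H.Reachable u v := hu.2.1.symm.trans hv.2.1
  obtain ⟨p, hp⟩ := huv.exists_walk_length_eq_dist
  obtain ⟨y, hxy, hy, huy⟩ := hS.exists_adj_not_reachable hx u
  have hgt : 1 < H.dist u v :=
    huv.one_lt_dist_of_ne_of_not_adj hne fun h => hindep u hu.1 v hv.1 h.1
  have hle : H.dist u v ≤ 3 := (h2k2.removeVerts S).dist_le_three u v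
  have hne3 : p.length ≠ 3 := p.length_ne_three_of_removeVerts h2k2 hc3 hu.1 hv.1 hxy hy huy
  have h2 : H.edist u v = 2 := by
    rw [← huv.coe_dist_eq_edist]
    exact_mod_cast (by omega : H.dist u v = 2)
  obtain ⟨w, huw, hvw⟩ := (SimpleGraph.edist_eq_two_iff.1 h2).2.2
  exact ⟨w, ⟨hu.2.1.trans huw.reachable, huw.2.2⟩, huw.1, hvw.1.symm⟩

theorem stmt14 [Fintype V] (G : SimpleGraph V) (S C : Set V)
    (hconn : G.Connected) (h2k2 : G.TwoK2Free) (hc3 : G.CkFree 3)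
    (hS : G.IsMinSep S) (hC : G.IsCompOf S C) (hnt : ¬ ∃ v, C = {v}) :
    ∀ x ∈ S,
      (∀ u ∈ G.neighborSet x ∩ C, ∀ v ∈ G.neighborSet x ∩ C, ¬ G.Adj u v) ∧
      (∀ u ∈ G.neighborSet x ∩ C, ∀ v ∈ G.neighborSet x ∩ C, u ≠ v →
        ¬ G.Adj u v ∧ ∃ w ∈ C, G.Adj u w ∧ G.Adj w v) :=
  stmt14_general G S C h2k2 hc3 hS hC
end
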